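/- Let γ > 0, c ∈ ℝ^d with c ≠ 0, and let f : ℝ^d → ℝ be twice continuously differentiable on a neighborhood of ω* ∈ ℝ^d with f(ω*) ≤ 0 and ∇f(ω*) ≠ 0, and suppose ⟨p, ∇²f(ω*)·p⟩ ≤ γ‖p‖² for all p ∈ ℝ^d. Let Π denote the orthogonal projection of ℝ^d onto the orthogonal complement of ∇f(ω*). If ω* is a local maximizer of ⟨c,·⟩ over {ω : f(ω) ≤ 0}, then ‖γ·v − Π(∇²f(ω*)·v)‖ ≤ γ‖v‖ for every v orthogonal to ∇f(ω*). If in addition ⟨v, ∇²f(ω*)·v⟩ > 0 for every nonzero v orthogonal to ∇f(ω*), then there exists ρ < γ such that ‖γ·v − Π(∇²f(ω*)·v)‖ ≤ ρ‖v‖ for every v orthogonal to ∇f(ω*). -/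

import Mathlib

open scoped RealInnerProductSpace

def IsLocalMaximizer {d : ℕ} (c : EuclideanSpace ℝ (Fin d))
    (S : Set (EuclideanSpace ℝ (Fin d))) (x : EuclideanSpace ℝ (Fin d)) : Prop :=
  x ∈ S ∧ ∃ δ > 0, ∀ ω ∈ S, ‖ω - x‖ ≤ δ → ⟪c, ω⟫ ≤ ⟪c, x⟫

/-!
Along a parabola `ω* + h v + h² w` with `v ⟂ ∇f(ω*)` the constraint takes the value
`f(ω*) + h² (⟪∇f(ω*), w⟫ + ⟪∇²f(ω*) v, v⟫ / 2) + o(h²)`, so such a parabola is feasible for small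
`h > 0` as soon as the bracket is negative. Local maximality of `⟨c,·⟩` along these parabolas
first forces `c ⟂ ∇f(ω*)ᗮ`, and then forbids directions of negative curvature in `∇f(ω*)ᗮ`:
the projected Hessian `H_V` satisfies `0 ≤ H_V ≤ γ`. Cauchy–Schwarz for the form `⟪H_V ·, ·⟫`
gives `‖H_V v‖² ≤ γ ⟪H_V v, v⟫`, hence `‖γ v - H_V v‖² ≤ γ² ‖v‖² - γ ⟪H_V v, v⟫`. If `H_V` is
positive definite, compactness of the unit sphere of `V` gives `⟪H_V v, v⟫ ≥ m ‖v‖²` with `m > 0`,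
and `ρ = √(γ² - γ m)` works.
-/

open InnerProductSpace Filter Metric Topology

section PositiveOperator

variable {F : Type*} [NormedAddCommGroup F] [InnerProductSpace ℝ F]

theorem LinearMap.IsPositive.inner_apply_sq_le {A : F →ₗ[ℝ] F} (hA : A.IsPositive) (x y : F) :
    ⟪A x, y⟫ ^ 2 ≤ ⟪A x, x⟫ * ⟪A y, y⟫ := by
  have hquad : ∀ t : ℝ, 0 ≤ ⟪A y, y⟫ * (t * t) + 2 * ⟪A x, y⟫ * t + ⟪A x, x⟫ := by
    intro t
    have h := hA.inner_nonneg_left (x + t • y)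
    have hyx : ⟪A y, x⟫ = ⟪A x, y⟫ := by rw [hA.isSymmetric, real_inner_comm]
    simp only [map_add, map_smul, inner_add_left, inner_add_right, real_inner_smul_left,
      real_inner_smul_right, hyx] at h
    linarith
  have hdisc := discrim_le_zero hquad
  rw [discrim] at hdisc
  nlinarith

theorem LinearMap.IsPositive.norm_apply_sq_le {A : F →ₗ[ℝ] F} (hA : A.IsPositive) {γ : ℝ}
    (hup : ∀ x, ⟪A x, x⟫ ≤ γ * ‖x‖ ^ 2) (x : F) : ‖A x‖ ^ 2 ≤ γ * ⟪A x, x⟫ := by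
  rcases eq_or_ne (A x) 0 with hAx | hAx
  · simp [hAx]
  have hcs := hA.inner_apply_sq_le x (A x)
  rw [real_inner_comm, real_inner_self_eq_norm_sq] at hcs
  have hAx2 : 0 < ‖A x‖ ^ 2 := by positivity
  nlinarith [mul_le_mul_of_nonneg_left (hup (A x)) (hA.inner_nonneg_left x)]

theorem LinearMap.IsSymmetric.norm_smul_sub_apply_le {A : F →ₗ[ℝ] F} (hA : A.IsSymmetric)
    {γ m : ℝ} (hγ : 0 ≤ γ) (hm : 0 ≤ m) (hlow : ∀ x, m * ‖x‖ ^ 2 ≤ ⟪A x, x⟫)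
    (hup : ∀ x, ⟪A x, x⟫ ≤ γ * ‖x‖ ^ 2) (x : F) :
    ‖γ • x - A x‖ ≤ √(γ ^ 2 - γ * m) * ‖x‖ := by
  have hpos : A.IsPositive := ⟨hA, fun y => (mul_nonneg hm (sq_nonneg _)).trans (hlow y)⟩
  have hsq : ‖γ • x - A x‖ ^ 2 ≤ (γ ^ 2 - γ * m) * ‖x‖ ^ 2 := by
    rw [norm_sub_sq_real, real_inner_smul_left, norm_smul, Real.norm_of_nonneg hγ,
      real_inner_comm]
    nlinarith [hpos.norm_apply_sq_le hup x, mul_le_mul_of_nonneg_left (hlow x) hγ]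
  calc ‖γ • x - A x‖ = √(‖γ • x - A x‖ ^ 2) := (Real.sqrt_sq (norm_nonneg _)).symm
    _ ≤ √((γ ^ 2 - γ * m) * ‖x‖ ^ 2) := Real.sqrt_le_sqrt hsq
    _ = √(γ ^ 2 - γ * m) * ‖x‖ := by
      rw [Real.sqrt_mul' _ (sq_nonneg _), Real.sqrt_sq (norm_nonneg _)]

theorem LinearMap.exists_pos_mul_norm_sq_le_inner [FiniteDimensional ℝ F] (A : F →ₗ[ℝ] F)
    (hA : ∀ x ≠ 0, 0 < ⟪A x, x⟫) : ∃ m > 0, ∀ x, m * ‖x‖ ^ 2 ≤ ⟪A x, x⟫ := by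
  rcases subsingleton_or_nontrivial F with hF | hF
  · exact ⟨1, one_pos, fun x => by simp [Subsingleton.elim x 0]⟩
  have hcont : Continuous fun x => ⟪A x, x⟫ :=
    A.continuous_of_finiteDimensional.inner continuous_id
  obtain ⟨z, hz, hmin⟩ := (isCompact_sphere (0 : F) 1).exists_isMinOn
    (NormedSpace.sphere_nonempty.2 zero_le_one) hcont.continuousOn
  have hz1 : ‖z‖ = 1 := mem_sphere_zero_iff_norm.1 hz
  refine ⟨⟪A z, z⟫, hA z (norm_ne_zero_iff.1 (by rw [hz1]; exact one_ne_zero)), fun x => ?_⟩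
  rcases eq_or_ne x 0 with rfl | hx
  · simp
  have hnx : 0 < ‖x‖ := norm_pos_iff.2 hx
  have hunit : ‖x‖⁻¹ • x ∈ sphere (0 : F) 1 := by
    rw [mem_sphere_zero_iff_norm, norm_smul, norm_inv, norm_norm, inv_mul_cancel₀ hnx.ne']
  have h := hmin hunit
  simp only [Set.mem_ofPred_eq, map_smul, real_inner_smul_left, real_inner_smul_right] at h
  calc ⟪A z, z⟫ * ‖x‖ ^ 2 ≤ ‖x‖⁻¹ * (‖x‖⁻¹ * ⟪A x, x⟫) * ‖x‖ ^ 2 := by gcongr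
    _ = ⟪A x, x⟫ := by field_simp

end PositiveOperator

namespace Submodule

variable {E : Type*} [NormedAddCommGroup E] [InnerProductSpace ℝ E] (V : Submodule ℝ E)
  [V.HasOrthogonalProjection]

/-- For `T = ∇²f(ω*)` and `V = ∇f(ω*)ᗮ` this is the projected Hessian `H_V`. -/
noncomputable def compression (T : E →ₗ[ℝ] E) : V →ₗ[ℝ] V :=
  (V.orthogonalProjectionOnto : E →ₗ[ℝ] V) ∘ₗ T ∘ₗ V.subtype

theorem inner_compression_apply (T : E →ₗ[ℝ] E) (x y : V) :
    ⟪V.compression T x, y⟫ = ⟪T x, y⟫ :=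
  inner_orthogonalProjectionOnto_eq_of_mem_right y (T x)

theorem isSymmetric_compression {T : E →ₗ[ℝ] E} (hT : T.IsSymmetric) :
    (V.compression T).IsSymmetric := fun x y => by
  rw [inner_compression_apply, real_inner_comm (V.compression T y) x, inner_compression_apply, hT,
    real_inner_comm]

variable {V}

theorem norm_smul_sub_orthogonalProjectionOnto_le {T : E →ₗ[ℝ] E} (hT : T.IsSymmetric)
    {γ m : ℝ} (hγ : 0 ≤ γ) (hm : 0 ≤ m) (hlow : ∀ x ∈ V, m * ‖x‖ ^ 2 ≤ ⟪T x, x⟫)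
    (hup : ∀ x ∈ V, ⟪T x, x⟫ ≤ γ * ‖x‖ ^ 2) {v : E} (hv : v ∈ V) :
    ‖γ • v - (V.orthogonalProjectionOnto (T v) : E)‖ ≤ √(γ ^ 2 - γ * m) * ‖v‖ :=
  (V.isSymmetric_compression hT).norm_smul_sub_apply_le hγ hm
    (fun x => (V.inner_compression_apply T x x).symm ▸ hlow x x.2)
    (fun x => (V.inner_compression_apply T x x).symm ▸ hup x x.2) ⟨v, hv⟩

theorem exists_pos_mul_norm_sq_le_inner [FiniteDimensional ℝ V] (T : E →ₗ[ℝ] E)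
    (hT : ∀ x ∈ V, x ≠ 0 → 0 < ⟪T x, x⟫) : ∃ m > 0, ∀ x ∈ V, m * ‖x‖ ^ 2 ≤ ⟪T x, x⟫ := by
  obtain ⟨m, hm, hlow⟩ := (V.compression T).exists_pos_mul_norm_sq_le_inner fun x hx => by
    rw [inner_compression_apply]
    exact hT x x.2 (by simpa using hx)
  refine ⟨m, hm, fun x hx => ?_⟩
  have h := hlow ⟨x, hx⟩
  rwa [inner_compression_apply] at h

end Submodule

section Hessian

variable {E : Type*} [NormedAddCommGroup E] [InnerProductSpace ℝ E] [CompleteSpace E]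
  {f : E → ℝ} {x : E}

theorem inner_fderiv_gradient_apply (hf : DifferentiableAt ℝ (fderiv ℝ f) x) (v w : E) :
    ⟪fderiv ℝ (gradient f) x v, w⟫ = fderiv ℝ (fderiv ℝ f) x v w := by
  have h : HasFDerivAt (gradient f) _ x :=
    (toDual ℝ E).symm.toContinuousLinearEquiv.hasFDerivAt.comp x hf.hasFDerivAt
  rw [h.fderiv]
  exact toDual_symm_apply

theorem ContDiffAt.differentiableAt_gradient (hf : ContDiffAt ℝ 2 f x) :
    DifferentiableAt ℝ (gradient f) x :=
  (toDual ℝ E).symm.toContinuousLinearEquiv.differentiableAt.comp x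
    ((hf.fderiv_right (m := 1) one_add_one_eq_two.le).differentiableAt one_ne_zero)

theorem ContDiffAt.isSymmetric_fderiv_gradient (hf : ContDiffAt ℝ 2 f x) :
    (fderiv ℝ (gradient f) x : E →ₗ[ℝ] E).IsSymmetric := fun v w => by
  have hd := (hf.fderiv_right (m := 1) one_add_one_eq_two.le).differentiableAt one_ne_zero
  simp only [ContinuousLinearMap.coe_coe]
  rw [inner_fderiv_gradient_apply hd, real_inner_comm, inner_fderiv_gradient_apply hd]
  exact hf.isSymmSndFDerivAt (by simp [minSmoothness_of_isRCLikeNormedField]) v w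

theorem isLittleO_taylor_two {G : E → E} {H : E →L[ℝ] E}
    (hf : ∀ᶠ y in 𝓝 x, HasGradientAt f (G y) y) (hG : HasFDerivAt G H x) :
    (fun k => f (x + k) - f x - ⟪G x, k⟫ - ⟪H k, k⟫ / 2) =o[𝓝 0] fun k => ‖k‖ ^ 2 := by
  rw [Asymptotics.isLittleO_iff]
  intro ε hε
  have hf0 : ∀ᶠ k in 𝓝 (0 : E), HasGradientAt f (G (x + k)) (x + k) :=
    (continuous_const_add x).tendsto' 0 x (add_zero x) |>.eventually hf
  have hG0 := (Asymptotics.isLittleO_iff.1 (hasFDerivAt_iff_isLittleO_nhds_zero.1 hG)) hε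
  obtain ⟨δ, hδ, hball⟩ := Metric.eventually_nhds_iff_ball.1 (hf0.and hG0)
  filter_upwards [ball_mem_nhds 0 hδ] with k hk
  have hseg : ∀ t ∈ Set.Icc (0 : ℝ) 1, t • k ∈ ball (0 : E) δ := fun t ht => by
    rw [mem_ball_zero_iff, norm_smul, Real.norm_of_nonneg ht.1]
    exact lt_of_le_of_lt (mul_le_of_le_one_left (norm_nonneg k) ht.2) (mem_ball_zero_iff.1 hk)
  set ψ : ℝ → ℝ := fun t => f (x + t • k) - t * ⟪G x, k⟫ - t ^ 2 / 2 * ⟪H k, k⟫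
  have hψ : ∀ t ∈ Set.Icc (0 : ℝ) 1, HasDerivWithinAt ψ
      (⟪G (x + t • k) - G x - H (t • k), k⟫) (Set.Icc 0 1) t := by
    intro t ht
    have hline : HasDerivAt (fun s : ℝ => x + s • k) k t :=
      ((hasDerivAt_id t).smul_const k).const_add x |>.congr_deriv (one_smul ℝ k)
    have hcomp := ((hball _ (hseg t ht)).1.hasFDerivAt).comp_hasDerivAt t hline
    have hψt := (hcomp.sub ((hasDerivAt_id t).mul_const ⟪G x, k⟫)).sub
      (((hasDerivAt_pow 2 t).div_const 2).mul_const ⟪H k, k⟫)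
    refine HasDerivWithinAt.congr_deriv (f := ψ) hψt.hasDerivWithinAt ?_
    simp only [toDual_apply_apply, map_smul, inner_sub_left, real_inner_smul_left]
    ring
  have hbound : ∀ t ∈ Set.Ico (0 : ℝ) 1,
      ‖⟪G (x + t • k) - G x - H (t • k), k⟫‖ ≤ ε * ‖k‖ ^ 2 := by
    intro t ht
    have hmem := hseg t (Set.Ico_subset_Icc_self ht)
    calc ‖⟪G (x + t • k) - G x - H (t • k), k⟫‖ ≤ ‖G (x + t • k) - G x - H (t • k)‖ * ‖k‖ :=
          norm_inner_le_norm _ _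
      _ ≤ ε * ‖t • k‖ * ‖k‖ := by gcongr; exact (hball _ hmem).2
      _ ≤ ε * ‖k‖ * ‖k‖ := by
          gcongr
          rw [norm_smul, Real.norm_of_nonneg ht.1]
          exact mul_le_of_le_one_left (norm_nonneg k) ht.2.le
      _ = ε * ‖k‖ ^ 2 := by ring
  have := norm_image_sub_le_of_norm_deriv_le_segment_01' hψ hbound
  simp only [ψ, one_smul, zero_smul, add_zero, one_pow, zero_mul, sub_zero, zero_pow two_ne_zero,
    zero_div, one_mul] at this
  rw [norm_pow, norm_norm, show f (x + k) - f x - ⟪G x, k⟫ - ⟪H k, k⟫ / 2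
    = f (x + k) - ⟪G x, k⟫ - 1 / 2 * ⟪H k, k⟫ - f x by ring]
  exact this

theorem eventually_apply_add_smul_add_sq_smul_lt {G : E → E} {H : E →L[ℝ] E} {v w : E}
    (hf : ∀ᶠ y in 𝓝 x, HasGradientAt f (G y) y) (hG : HasFDerivAt G H x)
    (hv : ⟪G x, v⟫ = 0) (hw : ⟪G x, w⟫ + ⟪H v, v⟫ / 2 < 0) :
    ∀ᶠ h in 𝓝[>] (0 : ℝ), f (x + h • v + h ^ 2 • w) < f x := by
  set R : E → ℝ := fun k => f (x + k) - f x - ⟪G x, k⟫ - ⟪H k, k⟫ / 2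
  have hk : Tendsto (fun h : ℝ => h • (v + h • w)) (𝓝 0) (𝓝 0) := by
    simpa using ((by fun_prop : Continuous fun h : ℝ => h • (v + h • w)).tendsto 0)
  have hnorm : Tendsto (fun h : ℝ => ‖v + h • w‖ ^ 2) (𝓝 0) (𝓝 (‖v‖ ^ 2)) := by
    simpa using ((by fun_prop : Continuous fun h : ℝ => ‖v + h • w‖ ^ 2).tendsto 0)
  have hquad : Tendsto (fun h : ℝ => ⟪H (v + h • w), v + h • w⟫) (𝓝 0) (𝓝 ⟪H v, v⟫) := by
    simpa using ((by fun_prop : Continuous fun h : ℝ => ⟪H (v + h • w), v + h • w⟫).tendsto 0)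
  -- the Taylor remainder at `h • (v + h • w)` is `o(‖h • (v + h • w)‖ ^ 2) = o(h ^ 2)`
  have hR : (fun h : ℝ => R (h • (v + h • w))) =o[𝓝 0] fun h => h ^ 2 := by
    refine ((isLittleO_taylor_two hf hG).comp_tendsto hk).trans_isBigO ?_
    refine ((Asymptotics.isBigO_refl (fun h : ℝ => h ^ 2) _).mul
      (hnorm.isBigO_one ℝ)).congr (fun h => ?_) (fun h => mul_one _)
    simp only [Function.comp_apply, norm_smul, Real.norm_eq_abs, mul_pow, sq_abs]
  have hRsmall := hR.bound (by linarith : 0 < -(⟪G x, w⟫ + ⟪H v, v⟫ / 2) / 4)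
  have hquadlt := hquad.eventually <| eventually_lt_nhds
    (by linarith : ⟪H v, v⟫ < ⟪H v, v⟫ - (⟪G x, w⟫ + ⟪H v, v⟫ / 2))
  filter_upwards [nhdsWithin_le_nhds hRsmall, nhdsWithin_le_nhds hquadlt, self_mem_nhdsWithin]
    with h hRh hquadh (hh : 0 < h)
  have hpar : x + h • v + h ^ 2 • w = x + h • (v + h • w) := by
    rw [smul_add, smul_smul, ← sq, add_assoc]
  have hexp : f (x + h • v + h ^ 2 • w) - f x
      = R (h • (v + h • w)) + h ^ 2 * (⟪G x, w⟫ + ⟪H (v + h • w), v + h • w⟫ / 2) := by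
    simp only [R, hpar, map_smul, real_inner_smul_left, real_inner_smul_right, inner_add_right,
      hv]
    ring
  rw [Real.norm_eq_abs, norm_pow, Real.norm_eq_abs, sq_abs] at hRh
  have hh2 := sq_pos_of_pos hh
  nlinarith [le_abs_self (R (h • (v + h • w))), mul_lt_mul_of_pos_left hquadh hh2,
    mul_neg_of_pos_of_neg hh2 hw]

end Hessian

namespace IsLocalMaximizer

variable {d : ℕ} {c x v w : EuclideanSpace ℝ (Fin d)} {S : Set (EuclideanSpace ℝ (Fin d))}

theorem eventually_inner_le (hmax : IsLocalMaximizer c S x)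
    (hS : ∀ᶠ h in 𝓝[>] (0 : ℝ), x + h • v + h ^ 2 • w ∈ S) :
    ∀ᶠ h in 𝓝[>] (0 : ℝ), ⟪c, v⟫ + h * ⟪c, w⟫ ≤ 0 := by
  obtain ⟨-, δ, hδ, hloc⟩ := hmax
  have hnear : Tendsto (fun h : ℝ => x + h • v + h ^ 2 • w) (𝓝 0) (𝓝 x) := by
    simpa using ((by fun_prop : Continuous fun h : ℝ => x + h • v + h ^ 2 • w).tendsto 0)
  filter_upwards [hS, nhdsWithin_le_nhds (hnear.eventually (closedBall_mem_nhds x hδ)),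
    self_mem_nhdsWithin] with h hSh hδh (hh : 0 < h)
  have hle := hloc _ hSh (by rwa [← dist_eq_norm])
  simp only [inner_add_right, real_inner_smul_right] at hle
  nlinarith

theorem inner_nonpos_of_curve (hmax : IsLocalMaximizer c S x)
    (hS : ∀ᶠ h in 𝓝[>] (0 : ℝ), x + h • v + h ^ 2 • w ∈ S) :
    ⟪c, v⟫ ≤ 0 ∧ (⟪c, v⟫ = 0 → ⟪c, w⟫ ≤ 0) := by
  have hev := hmax.eventually_inner_le hS
  refine ⟨le_of_tendsto ?_ hev, fun hcv => ?_⟩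
  · have := ((by fun_prop : Continuous fun h : ℝ => ⟪c, v⟫ + h * ⟪c, w⟫).tendsto 0).mono_left
      (nhdsWithin_le_nhds (s := Set.Ioi 0))
    simpa using this
  · obtain ⟨h, hle, hh : 0 < h⟩ := (hev.and self_mem_nhdsWithin).exists
    rw [hcv, zero_add] at hle
    exact nonpos_of_mul_nonpos_right hle hh

variable {f : EuclideanSpace ℝ (Fin d) → ℝ}
  {G : EuclideanSpace ℝ (Fin d) → EuclideanSpace ℝ (Fin d)}
  {H : EuclideanSpace ℝ (Fin d) →L[ℝ] EuclideanSpace ℝ (Fin d)}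

theorem inner_nonpos_of_second_order (hmax : IsLocalMaximizer c {ω | f ω ≤ 0} x)
    (hf : ∀ᶠ y in 𝓝 x, HasGradientAt f (G y) y) (hG : HasFDerivAt G H x)
    (hv : ⟪G x, v⟫ = 0) (hw : ⟪G x, w⟫ + ⟪H v, v⟫ / 2 < 0) :
    ⟪c, v⟫ ≤ 0 ∧ (⟪c, v⟫ = 0 → ⟪c, w⟫ ≤ 0) :=
  hmax.inner_nonpos_of_curve <| (eventually_apply_add_smul_add_sq_smul_lt hf hG hv hw).mono
    fun _ hlt => (hlt.trans_le hmax.1).le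

theorem inner_hessian_nonneg (hc : c ≠ 0) (hmax : IsLocalMaximizer c {ω | f ω ≤ 0} x)
    (hf : ∀ᶠ y in 𝓝 x, HasGradientAt f (G y) y) (hG : HasFDerivAt G H x) (hg : G x ≠ 0)
    (hv : ⟪G x, v⟫ = 0) : 0 ≤ ⟪H v, v⟫ := by
  -- first order: a tangent direction `u` becomes feasible after adding a large multiple of `-G x`
  have htangent : ∀ u, ⟪G x, u⟫ = 0 → ⟪c, u⟫ ≤ 0 := fun u hu =>
    (hmax.inner_nonpos_of_second_order hf hG (w := -((⟪H u, u⟫ / 2 + 1) / ‖G x‖ ^ 2) • G x) hu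
      (by
        rw [real_inner_smul_right, real_inner_self_eq_norm_sq, neg_mul,
          div_mul_cancel₀ _ (pow_ne_zero 2 (norm_ne_zero_iff.2 hg))]
        linarith)).1
  have hcv : ⟪c, v⟫ = 0 := le_antisymm (htangent v hv) <| by
    simpa using htangent (-v) (by rw [inner_neg_right, hv, neg_zero])
  -- second order: along a direction of negative curvature one could still move a little along `c`
  by_contra! hneg
  obtain ⟨t, ht, htc⟩ := exists_pos_mul_lt (by linarith : 0 < -(⟪H v, v⟫ / 2)) ⟪G x, c⟫
  have hct := (hmax.inner_nonpos_of_second_order hf hG (w := t • c) hv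
    (by rw [real_inner_smul_right]; linarith)).2 hcv
  rw [real_inner_smul_right, real_inner_self_eq_norm_sq] at hct
  have : 0 < ‖c‖ ^ 2 := by positivity
  nlinarith

end IsLocalMaximizer

theorem stmt_12_general {d : ℕ} (γ : ℝ) (hγ : 0 < γ)
    (c : EuclideanSpace ℝ (Fin d)) (hc : c ≠ 0)
    (f : EuclideanSpace ℝ (Fin d) → ℝ) (ωs : EuclideanSpace ℝ (Fin d))
    (hf : ∃ U ∈ nhds ωs, ContDiffOn ℝ 2 f U)
    (hg : gradient f ωs ≠ 0)
    (hbound : ∀ p : EuclideanSpace ℝ (Fin d),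
      ⟪p, fderiv ℝ (gradient f) ωs p⟫ ≤ γ * ‖p‖ ^ 2)
    (hmax : IsLocalMaximizer c {ω | f ω ≤ 0} ωs) :
    (∀ v : EuclideanSpace ℝ (Fin d), ⟪gradient f ωs, v⟫ = 0 →
      ‖γ • v - (Submodule.orthogonalProjection (Submodule.span ℝ {gradient f ωs})ᗮ
          (fderiv ℝ (gradient f) ωs v) : EuclideanSpace ℝ (Fin d))‖ ≤ γ * ‖v‖) ∧
    ((∀ v : EuclideanSpace ℝ (Fin d), v ≠ 0 → ⟪gradient f ωs, v⟫ = 0 →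
        0 < ⟪v, fderiv ℝ (gradient f) ωs v⟫) →
      ∃ ρ < γ, ∀ v : EuclideanSpace ℝ (Fin d), ⟪gradient f ωs, v⟫ = 0 →
        ‖γ • v - (Submodule.orthogonalProjection (Submodule.span ℝ {gradient f ωs})ᗮ
            (fderiv ℝ (gradient f) ωs v) : EuclideanSpace ℝ (Fin d))‖ ≤ ρ * ‖v‖) := by
  obtain ⟨U, hU, hfU⟩ := hf
  have hf2 : ContDiffAt ℝ 2 f ωs := hfU.contDiffAt hU
  have hgrad : ∀ᶠ y in 𝓝 ωs, HasGradientAt f (gradient f y) y :=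
    (hf2.eventually (by simp)).mono fun y hy => (hy.differentiableAt two_ne_zero).hasGradientAt
  have hV : ∀ v, v ∈ (ℝ ∙ gradient f ωs)ᗮ ↔ ⟪gradient f ωs, v⟫ = 0 := fun _ =>
    Submodule.mem_orthogonal_singleton_iff_inner_right
  have hpsd : ∀ v ∈ (ℝ ∙ gradient f ωs)ᗮ, 0 * ‖v‖ ^ 2 ≤ ⟪fderiv ℝ (gradient f) ωs v, v⟫ :=
    fun v hv => by
      simpa using hmax.inner_hessian_nonneg hc hgrad hf2.differentiableAt_gradient.hasFDerivAt hg
        ((hV v).1 hv)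
  have hup : ∀ v ∈ (ℝ ∙ gradient f ωs)ᗮ, ⟪fderiv ℝ (gradient f) ωs v, v⟫ ≤ γ * ‖v‖ ^ 2 :=
    fun v _ => real_inner_comm v _ ▸ hbound v
  refine ⟨fun v hv => ?_, fun hpd => ?_⟩
  · simpa [Real.sqrt_sq hγ.le] using Submodule.norm_smul_sub_orthogonalProjectionOnto_le
      hf2.isSymmetric_fderiv_gradient hγ.le le_rfl hpsd hup ((hV v).2 hv)
  · obtain ⟨m, hm, hlow⟩ := Submodule.exists_pos_mul_norm_sq_le_inner
        (V := (ℝ ∙ gradient f ωs)ᗮ) (fderiv ℝ (gradient f) ωs : _ →ₗ[ℝ] _) fun v hv hv0 =>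
        real_inner_comm v _ ▸ hpd v hv0 ((hV v).1 hv)
    refine ⟨√(γ ^ 2 - γ * m), (Real.sqrt_lt' hγ).2 (by nlinarith), fun v hv => ?_⟩
    exact Submodule.norm_smul_sub_orthogonalProjectionOnto_le hf2.isSymmetric_fderiv_gradient
      hγ.le hm.le hlow hup ((hV v).2 hv)

/-- **The projected Jacobian is (strictly) non-expansive.** At a local maximizer `ω*` with
second derivatives of `f` bounded above by `γ`, the projected map
`v ↦ γv − Π(∇²f(ω*)v)` on the orthogonal complement of `∇f(ω*)` has norm at most `γ`;
strictly less than `γ` when the projected Hessian is positive definite. -/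
theorem stmt_12 {d : ℕ} (γ : ℝ) (hγ : 0 < γ)
    (c : EuclideanSpace ℝ (Fin d)) (hc : c ≠ 0)
    (f : EuclideanSpace ℝ (Fin d) → ℝ) (ωs : EuclideanSpace ℝ (Fin d))
    (hf : ∃ U ∈ nhds ωs, ContDiffOn ℝ 2 f U)
    (hfeas : f ωs ≤ 0) (hg : gradient f ωs ≠ 0)
    (hbound : ∀ p : EuclideanSpace ℝ (Fin d),
      ⟪p, fderiv ℝ (gradient f) ωs p⟫ ≤ γ * ‖p‖ ^ 2)
    (hmax : IsLocalMaximizer c {ω | f ω ≤ 0} ωs) :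
    (∀ v : EuclideanSpace ℝ (Fin d), ⟪gradient f ωs, v⟫ = 0 →
      ‖γ • v - (Submodule.orthogonalProjection (Submodule.span ℝ {gradient f ωs})ᗮ
          (fderiv ℝ (gradient f) ωs v) : EuclideanSpace ℝ (Fin d))‖ ≤ γ * ‖v‖) ∧
    ((∀ v : EuclideanSpace ℝ (Fin d), v ≠ 0 → ⟪gradient f ωs, v⟫ = 0 →
        0 < ⟪v, fderiv ℝ (gradient f) ωs v⟫) →
      ∃ ρ < γ, ∀ v : EuclideanSpace ℝ (Fin d), ⟪gradient f ωs, v⟫ = 0 →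
        ‖γ • v - (Submodule.orthogonalProjection (Submodule.span ℝ {gradient f ωs})ᗮ
            (fderiv ℝ (gradient f) ωs v) : EuclideanSpace ℝ (Fin d))‖ ≤ ρ * ‖v‖) :=
  stmt_12_general γ hγ c hc f ωs hf hg hbound hmax
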